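/- Let Z be a uniformly perfect compact metric space and G ↷ Z a uniformly quasi-Möbius action by homeomorphisms such that the induced action G ↷ Tri(Z) on the space of distinct triples is cocompact. Then for every nonempty open set U ⊆ Z there exists a sequence (g_k) in G such that diam(Z ∖ g_k(U)) → 0 as k → ∞. -/

import Mathlib

open Metric Set MeasureTheory Filter Topology

noncomputable section

/-- Cross-ratio of a four-tuple of points in a metric space. -/
def crossRatio {Z : Type*} [MetricSpace Z] (z₁ z₂ z₃ z₄ : Z) : NNReal :=
  nndist z₁ z₃ * nndist z₂ z₄ / (nndist z₁ z₄ * nndist z₂ z₃)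

/-- `f : X → Y` is `η`-quasi-Möbius. -/
def IsQuasiMobius {X Y : Type*} [MetricSpace X] [MetricSpace Y]
    (η : NNReal ≃ₜ NNReal) (f : X → Y) : Prop :=
  Function.Injective f ∧
  ∀ x₁ x₂ x₃ x₄ : X, x₁ ≠ x₂ → x₁ ≠ x₃ → x₁ ≠ x₄ → x₂ ≠ x₃ → x₂ ≠ x₄ → x₃ ≠ x₄ →
    crossRatio (f x₁) (f x₂) (f x₃) (f x₄) ≤ η (crossRatio x₁ x₂ x₃ x₄)

/-- `f : X → Y` is `η`-quasi-symmetric. -/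
def IsQuasiSymmetric {X Y : Type*} [MetricSpace X] [MetricSpace Y]
    (η : NNReal ≃ₜ NNReal) (f : X → Y) : Prop :=
  Function.Injective f ∧
  ∀ x₁ x₂ x₃ : X, x₁ ≠ x₂ → x₁ ≠ x₃ → x₂ ≠ x₃ →
    nndist (f x₁) (f x₂) / nndist (f x₁) (f x₃) ≤ η (nndist x₁ x₂ / nndist x₁ x₃)

/-- Lebesgue covering dimension is at most `n`. -/
def covDimLE (X : Type*) [TopologicalSpace X] (n : ℕ) : Prop :=
  ∀ 𝒰 : Set (Set X), (∀ U ∈ 𝒰, IsOpen U) → ⋃₀ 𝒰 = univ →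
    ∃ 𝒱 : Set (Set X), (∀ V ∈ 𝒱, IsOpen V) ∧ ⋃₀ 𝒱 = univ ∧
      (∀ V ∈ 𝒱, ∃ U ∈ 𝒰, V ⊆ U) ∧
      ∀ x : X, {V ∈ 𝒱 | x ∈ V}.encard ≤ (n + 1 : ℕ)

/-- Lebesgue covering (topological) dimension. -/
noncomputable def topDim (X : Type*) [TopologicalSpace X] : ℕ∞ :=
  ⨅ (n : ℕ) (_ : covDimLE X n), (n : ℕ∞)

/-- Ahlfors `Q`-regularity. -/
def AhlforsRegular (Q : ℝ) (Z : Type*) [MetricSpace Z] [MeasurableSpace Z] [BorelSpace Z] :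
    Prop :=
  0 < Q ∧ CompleteSpace Z ∧ 0 < Metric.diam (univ : Set Z) ∧
  ∃ C : ℝ, 1 ≤ C ∧ ∀ (z : Z) (R : ℝ), 0 < R → R ≤ Metric.diam (univ : Set Z) →
    ENNReal.ofReal (R ^ Q / C) ≤ μH[Q] (Metric.ball z R) ∧
    μH[Q] (Metric.ball z R) ≤ ENNReal.ofReal (C * R ^ Q)

/-- The action of `G` on `Z` is by homeomorphisms, each `η`-quasi-Möbius. -/
def QMAction (η : NNReal ≃ₜ NNReal) (G Z : Type*) [Group G] [MulAction G Z]
    [MetricSpace Z] : Prop :=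
  (∀ g : G, Continuous fun z : Z => g • z) ∧
  ∀ g : G, IsQuasiMobius η (fun z : Z => g • z)

/-- Cocompactness of the induced action on distinct triples (for compact `Z`). -/
def TriplesCocompact (G Z : Type*) [Group G] [MulAction G Z] [MetricSpace Z] : Prop :=
  ∃ δ > (0:ℝ), ∀ z₁ z₂ z₃ : Z, z₁ ≠ z₂ → z₁ ≠ z₃ → z₂ ≠ z₃ →
    ∃ g : G, δ ≤ dist (g • z₁) (g • z₂) ∧ δ ≤ dist (g • z₁) (g • z₃) ∧
      δ ≤ dist (g • z₂) (g • z₃)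

def IsStableValue {X Y : Type*} [TopologicalSpace X] [MetricSpace Y]
    (f : X → Y) (y : Y) : Prop :=
  ∃ ε > (0:ℝ), ∀ g : X → Y, Continuous g → (∀ x, dist (f x) (g x) < ε) → y ∈ range g

def IsStableValueOn {X Y : Type*} [TopologicalSpace X] [MetricSpace Y]
    (f : X → Y) (s : Set X) (y : Y) : Prop :=
  IsStableValue (fun x : s => f x) y

def IsStablePoint {X Y : Type*} [TopologicalSpace X] [MetricSpace Y]
    (f : X → Y) (x : X) : Prop :=
  ∀ U ∈ nhds x, IsStableValueOn f U (f x)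

/-- `f` is a regular map. -/
def IsRegularMap {X Y : Type*} [MetricSpace X] [MetricSpace Y] (f : X → Y) : Prop :=
  (∃ L : NNReal, LipschitzWith L f) ∧
  ∃ N : ℕ, ∀ (y : Y) (r : ℝ), 0 < r → ∃ t : Finset X, t.card ≤ N ∧
    f ⁻¹' Metric.ball y r ⊆ ⋃ c ∈ t, Metric.ball c r

/-- A metric space is doubling. -/
def MetricDoubling (Y : Type*) [MetricSpace Y] : Prop :=
  ∃ M : ℕ, ∀ (y : Y) (R : ℝ), ∃ t : Finset Y, t.card ≤ M ∧
    Metric.ball y R ⊆ ⋃ c ∈ t, Metric.ball c (R / 2)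

/-- A metric space is uniformly perfect. -/
def UniformlyPerfect (Z : Type*) [MetricSpace Z] : Prop :=
  ∃ lam : ℝ, 1 ≤ lam ∧ ∀ (z : Z) (R : ℝ), 0 < R → R ≤ Metric.diam (univ : Set Z) →
    (Metric.closedBall z R \ Metric.ball z (R / lam)).Nonempty

/-- `(S, q)` is a weak tangent of `Z`: `S` is complete and some rescalings
`(λ_k Z, p_k)` converge to `(S, q)` in the pointed Gromov–Hausdorff sense. -/
def PointedWeakTangent (Z : Type*) [MetricSpace Z] (S : Type*) [MetricSpace S]
    (q : S) : Prop :=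
  CompleteSpace S ∧
  ∃ (lam : ℕ → ℝ) (p : ℕ → Z), (∀ k, 0 < lam k) ∧ Tendsto lam atTop atTop ∧
    ∀ R > (0:ℝ), ∀ ε > (0:ℝ), ∃ (N : ℕ) (M : Set S),
      q ∈ M ∧ M ⊆ Metric.ball q R ∧ (∀ s ∈ Metric.ball q R, ∃ m ∈ M, dist s m ≤ ε) ∧
      ∀ k ≥ N, ∃ (Mk : Set Z) (F : Z → S),
        p k ∈ Mk ∧ (∀ z ∈ Mk, lam k * dist z (p k) < R) ∧
        (∀ z : Z, lam k * dist z (p k) < R → ∃ w ∈ Mk, lam k * dist z w ≤ ε) ∧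
        F (p k) = q ∧ Set.BijOn F Mk M ∧
        ∀ a ∈ Mk, ∀ b ∈ Mk, |lam k * dist a b - dist (F a) (F b)| < ε


/-! Choose a ball `B(p, r) ⊆ U` and a point `z ≠ p` close to `p`; cocompactness on triples (with a
third point supplied by uniform perfectness) gives `g` with `dist (g p) (g z) ≥ δ`. If `u, v ∉ g U`,
then `g⁻¹ u` and `g⁻¹ v` lie outside the ball, so the cross-ratio `[g⁻¹ u, p, g⁻¹ v, z]` is
`O(dist p z)`, and the quasi-Möbius bound yields `δ · dist u v ≤ η([g⁻¹ u, p, g⁻¹ v, z]) · (diam Z)²`,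
which tends to `0` with `dist p z`. -/

lemma coe_crossRatio {Z : Type*} [MetricSpace Z] (z₁ z₂ z₃ z₄ : Z) :
    (crossRatio z₁ z₂ z₃ z₄ : ℝ) = dist z₁ z₃ * dist z₂ z₄ / (dist z₁ z₄ * dist z₂ z₃) := by
  simp only [crossRatio, NNReal.coe_div, NNReal.coe_mul, coe_nndist]

namespace Homeomorph

lemma strictMono_nnreal (η : NNReal ≃ₜ NNReal) : StrictMono η := by
  refine (η.continuous.strictMono_of_inj η.injective).resolve_right fun hanti => ?_
  -- an antitone surjection would send `0` to a greatest element
  obtain ⟨x, hx⟩ := η.surjective (η 0 + 1)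
  have := hanti.antitone (zero_le : 0 ≤ x)
  rw [hx] at this
  simp at this

lemma map_zero_nnreal (η : NNReal ≃ₜ NNReal) : η 0 = 0 :=
  (η.strictMono_nnreal.orderIsoOfSurjective η η.surjective).map_bot

end Homeomorph

lemma IsQuasiMobius.dist_mul_dist_le {X Y : Type*} [MetricSpace X] [MetricSpace Y] [BoundedSpace Y]
    {η : NNReal ≃ₜ NNReal} {f : X → Y} (hf : IsQuasiMobius η f) {x₁ x₂ x₃ x₄ : X}
    (h₁₂ : x₁ ≠ x₂) (h₁₃ : x₁ ≠ x₃) (h₁₄ : x₁ ≠ x₄) (h₂₃ : x₂ ≠ x₃) (h₂₄ : x₂ ≠ x₄)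
    (h₃₄ : x₃ ≠ x₄) :
    dist (f x₁) (f x₃) * dist (f x₂) (f x₄) ≤
      η (crossRatio x₁ x₂ x₃ x₄) * diam (univ : Set Y) ^ 2 := by
  have hcr : (crossRatio (f x₁) (f x₂) (f x₃) (f x₄) : ℝ) ≤ η (crossRatio x₁ x₂ x₃ x₄) :=
    NNReal.coe_le_coe.mpr (hf.2 x₁ x₂ x₃ x₄ h₁₂ h₁₃ h₁₄ h₂₃ h₂₄ h₃₄)
  have hden : 0 < dist (f x₁) (f x₄) * dist (f x₂) (f x₃) :=
    mul_pos (dist_pos.mpr (hf.1.ne h₁₄)) (dist_pos.mpr (hf.1.ne h₂₃))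
  have hdiam (y y' : Y) : dist y y' ≤ diam (univ : Set Y) :=
    dist_le_diam_of_mem (Bornology.IsBounded.all _) (mem_univ y) (mem_univ y')
  rw [coe_crossRatio, div_le_iff₀ hden] at hcr
  calc dist (f x₁) (f x₃) * dist (f x₂) (f x₄)
      ≤ η (crossRatio x₁ x₂ x₃ x₄) * (dist (f x₁) (f x₄) * dist (f x₂) (f x₃)) := hcr
    _ ≤ η (crossRatio x₁ x₂ x₃ x₄) * diam (univ : Set Y) ^ 2 := by
      rw [sq]
      gcongr <;> exact hdiam _ _

lemma coe_crossRatio_le_of_le_dist {Z : Type*} [MetricSpace Z] [BoundedSpace Z] {u p v z : Z}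
    {r s : ℝ} (hr : 0 < r) (hu : r ≤ dist u p) (hv : r ≤ dist v p) (hpz : dist p z ≤ s)
    (hs : s ≤ r / 2) :
    (crossRatio u p v z : ℝ) ≤ 2 * diam (univ : Set Z) * s / r ^ 2 := by
  have huz : r / 2 ≤ dist u z := by linarith [dist_triangle u z p, dist_comm p z]
  have huv : dist u v ≤ diam (univ : Set Z) :=
    dist_le_diam_of_mem (Bornology.IsBounded.all _) (mem_univ u) (mem_univ v)
  rw [coe_crossRatio, dist_comm p v]
  calc dist u v * dist p z / (dist u z * dist v p)
      ≤ diam (univ : Set Z) * s / (r / 2 * r) := by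
        gcongr
        exact mul_nonneg diam_nonneg (dist_nonneg.trans hpz)
    _ = 2 * diam (univ : Set Z) * s / r ^ 2 := by
        field_simp

lemma UniformlyPerfect.exists_ne_dist_le {Z : Type*} [MetricSpace Z] (h : UniformlyPerfect Z)
    (p : Z) {s : ℝ} (hs : 0 < s) (hsD : s ≤ diam (univ : Set Z)) :
    ∃ z, z ≠ p ∧ dist z p ≤ s := by
  obtain ⟨lam, hlam, hannulus⟩ := h
  obtain ⟨z, hz, hz'⟩ := hannulus p s hs hsD
  have hfar : s / lam ≤ dist z p := not_lt.mp hz'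
  refine ⟨z, fun hzp => ?_, hz⟩
  rw [hzp, dist_self] at hfar
  exact (div_pos hs (zero_lt_one.trans_le hlam)).not_ge hfar

lemma TriplesCocompact.exists_dist_smul_ge {G Z : Type*} [Group G] [MulAction G Z]
    [MetricSpace Z] (hcc : TriplesCocompact G Z) (hup : UniformlyPerfect Z) :
    ∃ δ > 0, ∀ (p : Z) (s : ℝ), 0 < s → s ≤ diam (univ : Set Z) →
      ∃ z, z ≠ p ∧ dist z p ≤ s ∧ ∃ g : G, δ ≤ dist (g • p) (g • z) := by
  obtain ⟨δ, hδ, hpush⟩ := hcc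
  refine ⟨δ, hδ, fun p s hs hsD => ?_⟩
  obtain ⟨z, hzp, hzs⟩ := hup.exists_ne_dist_le p hs hsD
  have hz : 0 < dist z p := dist_pos.mpr hzp
  obtain ⟨w, hwp, hwz⟩ := hup.exists_ne_dist_le p (half_pos hz) (by linarith)
  have hzw : z ≠ w := by
    rintro rfl
    linarith
  obtain ⟨g, hg, -, -⟩ := hpush p z w hzp.symm hwp.symm hzw
  exact ⟨z, hzp, hzs, g, hg⟩

lemma exists_seq_tendsto_zero_of_forall_exists_le {α : Type*} {f : α → ℝ} (hf : ∀ a, 0 ≤ f a)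
    (h : ∀ ε > 0, ∃ a, f a ≤ ε) : ∃ a : ℕ → α, Tendsto (fun n => f (a n)) atTop (𝓝 0) := by
  choose a ha using fun n : ℕ => h (1 / (n + 1)) Nat.one_div_pos_of_nat
  exact ⟨a, squeeze_zero (fun n => hf _) ha tendsto_one_div_add_atTop_nhds_zero_nat⟩

section Action

variable {Z : Type*} [MetricSpace Z] [BoundedSpace Z] {G : Type*} [Group G] [MulAction G Z]
  {η : NNReal ≃ₜ NNReal} {U : Set Z}

lemma diam_compl_smul_image_le (hqm : ∀ g : G, IsQuasiMobius η (fun z : Z => g • z))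
    {p z : Z} {r s δ : ℝ} {g : G} (hr : 0 < r) (hball : ball p r ⊆ U) (hzp : z ≠ p)
    (hpz : dist p z ≤ s) (hs : s ≤ r / 2) (hδ : 0 < δ) (hg : δ ≤ dist (g • p) (g • z)) :
    diam (univ \ (fun x => g • x) '' U) ≤
      η (Real.toNNReal (2 * diam (univ : Set Z) * s / r ^ 2)) * diam (univ : Set Z) ^ 2 / δ := by
  set D := diam (univ : Set Z)
  set T := Real.toNNReal (2 * D * s / r ^ 2)
  have hpU : p ∈ U := hball (mem_ball_self hr)
  have hzU : z ∈ U := hball (mem_ball'.mpr (by linarith))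
  have notMem_of_notMem_image {u : Z} (hu : u ∉ (fun x => g • x) '' U) : g⁻¹ • u ∉ U :=
    fun h => hu ⟨g⁻¹ • u, h, smul_inv_smul g u⟩
  have far_of_notMem {x : Z} (hx : x ∉ U) : r ≤ dist x p :=
    not_lt.mp fun h => hx (hball (mem_ball.mpr h))
  refine diam_le_of_forall_dist_le (by positivity) fun u hu v hv => ?_
  obtain rfl | huv := eq_or_ne u v
  · rw [dist_self]
    positivity
  have hgu := notMem_of_notMem_image hu.2
  have hgv := notMem_of_notMem_image hv.2
  have hcr : crossRatio (g⁻¹ • u) p (g⁻¹ • v) z ≤ T := NNReal.le_toNNReal_of_coe_le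
    (coe_crossRatio_le_of_le_dist hr (far_of_notMem hgu) (far_of_notMem hgv) hpz hs)
  have hqm' := (hqm g).dist_mul_dist_le (ne_of_mem_of_not_mem hpU hgu).symm
    (by simpa using huv) (ne_of_mem_of_not_mem hzU hgu).symm (ne_of_mem_of_not_mem hpU hgv)
    hzp.symm (ne_of_mem_of_not_mem hzU hgv).symm
  rw [smul_inv_smul, smul_inv_smul] at hqm'
  rw [le_div_iff₀ hδ]
  calc dist u v * δ
      ≤ dist u v * dist (g • p) (g • z) := by gcongr
    _ ≤ η (crossRatio (g⁻¹ • u) p (g⁻¹ • v) z) * D ^ 2 := hqm'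
    _ ≤ η T * D ^ 2 := by gcongr; exact η.strictMono_nnreal.monotone hcr

lemma exists_diam_compl_smul_image_le (hup : UniformlyPerfect Z)
    (hqm : ∀ g : G, IsQuasiMobius η (fun z : Z => g • z)) (hcc : TriplesCocompact G Z)
    {p : Z} {r : ℝ} (hr : 0 < r) (hball : ball p r ⊆ U) {ε : ℝ} (hε : 0 < ε) :
    ∃ g : G, diam (univ \ (fun x => g • x) '' U) ≤ ε := by
  set D := diam (univ : Set Z)
  obtain hD | hD := le_or_gt D ε
  · exact ⟨1, (diam_mono (subset_univ _) (Bornology.IsBounded.all _)).trans hD⟩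
  obtain ⟨δ, hδ, hpair⟩ := hcc.exists_dist_smul_ge hup
  set bound : ℝ → ℝ := fun s => η (Real.toNNReal (2 * D * s / r ^ 2)) * D ^ 2 / δ
  have hbound : Tendsto bound (𝓝 0) (𝓝 0) := by
    have : Continuous bound := by fun_prop
    simpa [bound, Homeomorph.map_zero_nnreal] using this.tendsto 0
  have hsmall : ∀ᶠ s in 𝓝 0, bound s ≤ ε ∧ s ≤ r / 2 ∧ s ≤ D :=
    (hbound.eventually (eventually_le_nhds hε)).and
      ((eventually_le_nhds (half_pos hr)).and (eventually_le_nhds (hε.trans hD)))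
  obtain ⟨s, ⟨hbs, hsr, hsD⟩, hs⟩ :=
    ((hsmall.filter_mono nhdsWithin_le_nhds).and (self_mem_nhdsWithin (s := Ioi 0))).exists
  obtain ⟨z, hzp, hzs, g, hg⟩ := hpair p s hs hsD
  exact ⟨g, (diam_compl_smul_image_le hqm hr hball hzp (by rwa [dist_comm]) hsr hδ hg).trans hbs⟩

end Action

theorem complement_of_blown_up_open_set_small_general {Z : Type*} [MetricSpace Z]
    [CompactSpace Z] (hup : UniformlyPerfect Z)
    {G : Type*} [Group G] [MulAction G Z] (η : NNReal ≃ₜ NNReal)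
    (hqm : ∀ g : G, IsQuasiMobius η (fun z : Z => g • z))
    (hcc : TriplesCocompact G Z)
    (U : Set Z) (hU : IsOpen U) (hne : U.Nonempty) :
    ∃ g : ℕ → G,
      Tendsto (fun k => Metric.diam (univ \ (fun z => g k • z) '' U)) atTop (nhds 0) := by
  obtain ⟨p, hp⟩ := hne
  obtain ⟨r, hr, hball⟩ := isOpen_iff.mp hU p hp
  exact exists_seq_tendsto_zero_of_forall_exists_le
    (f := fun g : G => diam (univ \ (fun z => g • z) '' U)) (fun _ => diam_nonneg)
    fun ε hε => exists_diam_compl_smul_image_le hup hqm hcc hr hball hε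

/-- **Bonk–Kleiner, Lemma 5.1 (ii).** For a uniformly quasi-Möbius action on a
uniformly perfect compact space which is cocompact on distinct triples, every
nonempty open set can be blown up so that the complement of its image has
arbitrarily small diameter. -/
theorem complement_of_blown_up_open_set_small {Z : Type*} [MetricSpace Z]
    [CompactSpace Z] (hup : UniformlyPerfect Z)
    {G : Type*} [Group G] [MulAction G Z] (η : NNReal ≃ₜ NNReal)
    (hcont : ∀ g : G, Continuous fun z : Z => g • z)
    (hqm : ∀ g : G, IsQuasiMobius η (fun z : Z => g • z))
    (hcc : TriplesCocompact G Z)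
    (U : Set Z) (hU : IsOpen U) (hne : U.Nonempty) :
    ∃ g : ℕ → G,
      Tendsto (fun k => Metric.diam (univ \ (fun z => g k • z) '' U)) atTop (nhds 0) :=
  complement_of_blown_up_open_set_small_general hup η hqm hcc U hU hne

end
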